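/- arXiv:2501.18307 — 3 statements merged into one kernel-verified Lean document; each statement's English description precedes it below -/
import Mathlib

section
/- (Lemma 2.1, energy/maximal L² regularity estimate for the semi-discrete parabolic problem, with corrected constant (b₀+1)/2.) Let g : [0,T] → V be continuous and let w : [0,T] → V be continuously differentiable with w'(s) = b₀·A w(s) − ν·w(s) + g(s) for all s ∈ [0,T]. Then for every t ∈ [0,T] one has (1/2)·∫₀ᵗ ‖w'(s)‖² ds + ((b₀+1)/2)·( a(w(t),w(t)) − a(w(0),w(0)) ) + (ν/2)·( ‖w(t)‖² − ‖w(0)‖² ) + (b₀/2)·∫₀ᵗ ‖A w(s)‖² ds + ν·∫₀ᵗ a(w(s),w(s)) ds ≤ (1/2)·(1 + 1/b₀)·∫₀ᵗ ‖g(s)‖² ds. -/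
open scoped RealInnerProductSpace

lemma pointwise_energy {V : Type*} [NormedAddCommGroup V] [InnerProductSpace ℝ V]
    (b₀ ν : ℝ) (hb₀ : 0 < b₀) (u G d x : V) (hd : d = b₀ • x - ν • u + G) :
    (1/2)*‖d‖^2 + (b₀+1)*(-⟪x, d⟫) + ν*⟪u, d⟫ + (b₀/2)*‖x‖^2 + ν*(-⟪x,u⟫)
      ≤ (1/2)*(1+1/b₀)*‖G‖^2 := by
  have h1 : (0:ℝ) ≤ ‖G - d‖^2 := sq_nonneg _
  have h2 : (0:ℝ) ≤ ‖b₀ • x + G‖^2 := sq_nonneg _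
  have e1 : ‖G - d‖^2 = ‖G‖^2 - 2*⟪G,d⟫ + ‖d‖^2 := by
    rw [@norm_sub_sq_real]
  have e2 : ‖b₀ • x + G‖^2 = b₀^2*‖x‖^2 + 2*b₀*⟪x,G⟫ + ‖G‖^2 := by
    rw [@norm_add_sq_real, norm_smul, real_inner_smul_left, Real.norm_eq_abs, mul_pow, sq_abs]
    ring
  have hdx : ⟪x, d⟫ = b₀*‖x‖^2 - ν*⟪x,u⟫ + ⟪x,G⟫ := by
    rw [hd, inner_add_right, inner_sub_right, real_inner_smul_right, real_inner_smul_right,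
      real_inner_self_eq_norm_sq]
  have hud : ⟪u, d⟫ = b₀*⟪u,x⟫ - ν*‖u‖^2 + ⟪u,G⟫ := by
    rw [hd, inner_add_right, inner_sub_right, real_inner_smul_right, real_inner_smul_right,
      real_inner_self_eq_norm_sq]
  have hdd : ‖d‖^2 = b₀*⟪x,d⟫ - ν*⟪u,d⟫ + ⟪G,d⟫ := by
    rw [← real_inner_self_eq_norm_sq]
    nth_rewrite 1 [hd]
    rw [inner_add_left, inner_sub_left, real_inner_smul_left, real_inner_smul_left]
  rw [e1] at h1; rw [e2] at h2
  have key : (1/2)*‖d‖^2 + (b₀+1)*(-⟪x, d⟫) + ν*⟪u, d⟫ + (b₀/2)*‖x‖^2 + ν*(-⟪x,u⟫)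
      = -(1/2)*‖d‖^2 + ⟪G,d⟫ - ⟪x,G⟫ - (b₀/2)*‖x‖^2 := by
    rw [hdd, hdx, hud, real_inner_comm u x]; ring
  rw [key]
  have h2' : 0 ≤ b₀*‖x‖^2 + 2*⟪x,G⟫ + (1/b₀)*‖G‖^2 := by
    have := div_nonneg h2 hb₀.le
    have hb' : b₀ ≠ 0 := hb₀.ne'
    calc (0:ℝ) ≤ (b₀^2*‖x‖^2 + 2*b₀*⟪x,G⟫ + ‖G‖^2)/b₀ := this
      _ = b₀*‖x‖^2 + 2*⟪x,G⟫ + (1/b₀)*‖G‖^2 := by field_simp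
  nlinarith

/-- Lemma 2.1 (energy / maximal `L²` regularity estimate for the semi-discrete
parabolic problem `w' = b₀ A w - ν w + g`), with corrected constant `(b₀+1)/2`.
Here `a(ψ,φ) = -⟪A ψ, φ⟫` abstracts the Dirichlet form, and `A` the discrete
Laplacian `Δ_h` on the finite element space. -/
theorem energy_estimate_parabolic
    {V : Type*} [NormedAddCommGroup V] [InnerProductSpace ℝ V]
    [FiniteDimensional ℝ V]
    (A : V →ₗ[ℝ] V)
    (hA_sym : ∀ ψ φ : V, ⟪A ψ, φ⟫ = ⟪ψ, A φ⟫)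
    (hA_neg : ∀ ψ : V, ⟪A ψ, ψ⟫ ≤ 0)
    (b₀ ν T : ℝ) (hb₀ : 0 < b₀) (hν : 0 ≤ ν) (hT : 0 < T)
    (g w w' : ℝ → V)
    (hg : ContinuousOn g (Set.Icc 0 T))
    (hw : ∀ s ∈ Set.Icc (0:ℝ) T, HasDerivAt w (w' s) s)
    (hw' : ContinuousOn w' (Set.Icc 0 T))
    (heq : ∀ s ∈ Set.Icc (0:ℝ) T, w' s = b₀ • A (w s) - ν • w s + g s)
    (t : ℝ) (ht : t ∈ Set.Icc (0:ℝ) T) :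
    (1/2) * (∫ s in (0:ℝ)..t, ‖w' s‖^2)
      + ((b₀ + 1)/2) * ((-⟪A (w t), w t⟫) - (-⟪A (w 0), w 0⟫))
      + (ν/2) * (‖w t‖^2 - ‖w 0‖^2)
      + (b₀/2) * (∫ s in (0:ℝ)..t, ‖A (w s)‖^2)
      + ν * (∫ s in (0:ℝ)..t, (-⟪A (w s), w s⟫))
      ≤ (1/2) * (1 + 1/b₀) * (∫ s in (0:ℝ)..t, ‖g s‖^2) := by
  obtain ⟨ht0, htT⟩ := ht
  have hsub : Set.Icc (0:ℝ) t ⊆ Set.Icc 0 T := Set.Icc_subset_Icc le_rfl htT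
  have huIcc : Set.uIcc (0:ℝ) t = Set.Icc 0 t := Set.uIcc_of_le ht0
  have h0T : (0:ℝ) ∈ Set.Icc (0:ℝ) T := ⟨le_rfl, hT.le⟩
  have htT' : t ∈ Set.Icc (0:ℝ) T := ⟨ht0, htT⟩
  -- continuity facts
  have hAc : Continuous fun v : V => A v := A.continuous_of_finiteDimensional
  have hwc : ContinuousOn w (Set.Icc 0 T) := fun s hs =>
    (hw s hs).continuousAt.continuousWithinAt
  have hAwc : ContinuousOn (fun s => A (w s)) (Set.Icc 0 T) := hAc.comp_continuousOn hwc
  have hAw'c : ContinuousOn (fun s => A (w' s)) (Set.Icc 0 T) := hAc.comp_continuousOn hw'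
  -- the auxiliary function and its derivative
  set F : ℝ → ℝ := fun s => ((b₀+1)/2) * (-⟪A (w s), w s⟫) + (ν/2) * ⟪w s, w s⟫ with hF
  set F' : ℝ → ℝ := fun s => (b₀+1) * (-⟪A (w s), w' s⟫) + ν * ⟪w s, w' s⟫ with hF'
  have hFd : ∀ s ∈ Set.Icc (0:ℝ) T, HasDerivAt F (F' s) s := by
    intro s hs
    have hws := hw s hs
    have hAws : HasDerivAt (fun s => A (w s)) (A (w' s)) s := by
      have := (A.toContinuousLinearMap.hasFDerivAt (x := w s)).comp_hasDerivAt s hws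
      simpa [Function.comp_def] using this
    have h1 : HasDerivAt (fun s => ⟪A (w s), w s⟫)
        (⟪A (w s), w' s⟫ + ⟪A (w' s), w s⟫) s := HasDerivAt.inner ℝ hAws hws
    have h2 : HasDerivAt (fun s => ⟪w s, w s⟫)
        (⟪w s, w' s⟫ + ⟪w' s, w s⟫) s := HasDerivAt.inner ℝ hws hws
    have hsym : ⟪A (w' s), w s⟫ = ⟪A (w s), w' s⟫ := by
      rw [hA_sym, real_inner_comm]
    have hcomm : ⟪w' s, w s⟫ = ⟪w s, w' s⟫ := real_inner_comm _ _
    have := ((h1.neg.const_mul ((b₀+1)/2)).add (h2.const_mul (ν/2)))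
    have hF'' : F' s = (b₀ + 1) / 2 * -(⟪A (w s), w' s⟫ + ⟪A (w' s), w s⟫)
        + ν / 2 * (⟪w s, w' s⟫ + ⟪w' s, w s⟫) := by
      simp only [hF']; rw [hsym, hcomm]; ring
    rw [hF'']
    exact this
  -- integrability
  have i1 : IntervalIntegrable (fun s => ‖w' s‖^2) MeasureTheory.volume 0 t :=
    ((hw'.mono hsub).norm.pow 2).intervalIntegrable_of_Icc ht0
  have i2 : IntervalIntegrable F' MeasureTheory.volume 0 t := by
    apply ContinuousOn.intervalIntegrable_of_Icc ht0
    exact ((continuousOn_const.mul (ContinuousOn.inner (𝕜 := ℝ) (hAwc.mono hsub) (hw'.mono hsub)).neg).add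
      (continuousOn_const.mul (ContinuousOn.inner (𝕜 := ℝ) (hwc.mono hsub) (hw'.mono hsub))))
  have i3 : IntervalIntegrable (fun s => ‖A (w s)‖^2) MeasureTheory.volume 0 t :=
    ((hAwc.mono hsub).norm.pow 2).intervalIntegrable_of_Icc ht0
  have i4 : IntervalIntegrable (fun s => -⟪A (w s), w s⟫) MeasureTheory.volume 0 t :=
    (ContinuousOn.inner (𝕜 := ℝ) (hAwc.mono hsub) (hwc.mono hsub)).neg.intervalIntegrable_of_Icc ht0
  have ig : IntervalIntegrable (fun s => ‖g s‖^2) MeasureTheory.volume 0 t :=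
    ((hg.mono hsub).norm.pow 2).intervalIntegrable_of_Icc ht0
  -- FTC for F
  have hFTC : (∫ s in (0:ℝ)..t, F' s) = F t - F 0 := by
    apply intervalIntegral.integral_eq_sub_of_hasDerivAt
    · intro x hx
      exact hFd x (hsub (huIcc ▸ hx))
    · exact i2
  -- the combined integrand
  set h₁ : ℝ → ℝ := fun s => (1/2)*‖w' s‖^2 + F' s + (b₀/2)*‖A (w s)‖^2
      + ν * (-⟪A (w s), w s⟫) with hh₁
  have ih₁ : IntervalIntegrable h₁ MeasureTheory.volume 0 t :=
    (((i1.const_mul (1/2)).add i2).add (i3.const_mul (b₀/2))).add (i4.const_mul ν)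
  have hmono : (∫ s in (0:ℝ)..t, h₁ s) ≤ ∫ s in (0:ℝ)..t, (1/2)*(1+1/b₀)*‖g s‖^2 := by
    apply intervalIntegral.integral_mono_on ht0 ih₁ (ig.const_mul _)
    intro s hs
    have hsT := hsub hs
    simp only [hh₁, hF']
    linarith [pointwise_energy b₀ ν hb₀ (w s) (g s) (w' s) (A (w s)) (heq s hsT)]
  have hsplit : (∫ s in (0:ℝ)..t, h₁ s)
      = (1/2) * (∫ s in (0:ℝ)..t, ‖w' s‖^2) + (∫ s in (0:ℝ)..t, F' s)
        + (b₀/2) * (∫ s in (0:ℝ)..t, ‖A (w s)‖^2)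
        + ν * (∫ s in (0:ℝ)..t, (-⟪A (w s), w s⟫)) := by
    rw [hh₁]
    rw [intervalIntegral.integral_add (((i1.const_mul (1/2)).add i2).add (i3.const_mul (b₀/2)))
      (i4.const_mul ν)]
    rw [intervalIntegral.integral_add ((i1.const_mul (1/2)).add i2) (i3.const_mul (b₀/2))]
    rw [intervalIntegral.integral_add (i1.const_mul (1/2)) i2]
    all_goals simp only [intervalIntegral.integral_const_mul]
  have hrhs : (∫ s in (0:ℝ)..t, (1/2)*(1+1/b₀)*‖g s‖^2)
      = (1/2) * (1 + 1/b₀) * (∫ s in (0:ℝ)..t, ‖g s‖^2) := by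
    rw [← intervalIntegral.integral_const_mul]
  have hFt : F t - F 0 = ((b₀ + 1)/2) * ((-⟪A (w t), w t⟫) - (-⟪A (w 0), w 0⟫))
      + (ν/2) * (‖w t‖^2 - ‖w 0‖^2) := by
    simp only [hF, real_inner_self_eq_norm_sq]; ring
  calc (1/2) * (∫ s in (0:ℝ)..t, ‖w' s‖^2)
      + ((b₀ + 1)/2) * ((-⟪A (w t), w t⟫) - (-⟪A (w 0), w 0⟫))
      + (ν/2) * (‖w t‖^2 - ‖w 0‖^2)
      + (b₀/2) * (∫ s in (0:ℝ)..t, ‖A (w s)‖^2)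
      + ν * (∫ s in (0:ℝ)..t, (-⟪A (w s), w s⟫))
      = ∫ s in (0:ℝ)..t, h₁ s := by rw [hsplit, hFTC, hFt]; ring
    _ ≤ ∫ s in (0:ℝ)..t, (1/2)*(1+1/b₀)*‖g s‖^2 := hmono
    _ = (1/2) * (1 + 1/b₀) * (∫ s in (0:ℝ)..t, ‖g s‖^2) := hrhs
end

section
/- (Lemma 2.2, additional parabolic estimate for a time-regular right-hand side.) Assume moreover that there is λ > 0 with −⟨A ψ, ψ⟩ ≥ λ·‖ψ‖² for all ψ ∈ V (discrete Poincaré inequality). Then there exists a constant C > 0, depending only on b₀, ν and λ (in particular independent of V, A, T, g and w), with the following property: for every continuously differentiable g : [0,T] → V and every continuously differentiable w : [0,T] → V satisfying w'(s) = b₀·A w(s) − ν·w(s) + g(s) for all s ∈ [0,T], one has for every t ∈ [0,T]: ‖w'(t)‖² + ∫₀ᵗ a(w'(s),w'(s)) ds + (b₀/2)·‖A w(t)‖² + (ν/2)·a(w(t),w(t)) ≤ C·e^{C t}·( sup_{s∈[0,t]} ‖g(s)‖² + ∫₀ᵗ ( ‖g(s)‖² + ‖g'(s)‖² ) ds + ‖A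 w(0)‖² + a(w(0),w(0)) ). -/
open scoped RealInnerProductSpace
open Set intervalIntegral

set_option maxHeartbeats 2000000

section gronwallHelpers
variable {t : ℝ} {f : ℝ → ℝ}

private lemma prim_ii (ht : 0 ≤ t) (hf : ContinuousOn f (Set.Icc 0 t)) :
    IntervalIntegrable f MeasureTheory.volume 0 t := by
  apply ContinuousOn.intervalIntegrable; rwa [Set.uIcc_of_le ht]

private lemma prim_cont (ht : 0 ≤ t) (hf : ContinuousOn f (Set.Icc 0 t)) :
    ContinuousOn (fun s => ∫ u in (0:ℝ)..s, f u) (Set.Icc 0 t) := by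
  have := intervalIntegral.continuousOn_primitive_interval' (prim_ii ht hf) Set.left_mem_uIcc
  rwa [Set.uIcc_of_le ht] at this

private lemma prim_deriv (ht : 0 ≤ t) (hf : ContinuousOn f (Set.Icc 0 t)) {s : ℝ}
    (hs : s ∈ Set.Ioo (0:ℝ) t) :
    HasDerivAt (fun r => ∫ u in (0:ℝ)..r, f u) (f s) s := by
  apply intervalIntegral.integral_hasDerivAt_right
  · exact (prim_ii ht hf).mono_set
      (by rw [Set.uIcc_of_le ht, Set.uIcc_of_le hs.1.le]; exact Set.Icc_subset_Icc le_rfl hs.2.le)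
  · exact (hf.mono Set.Ioo_subset_Icc_self).stronglyMeasurableAtFilter isOpen_Ioo s hs
  · exact hf.continuousAt (Icc_mem_nhds hs.1 hs.2)

private lemma prim_nonneg (ht : 0 ≤ t) (hf : ∀ s ∈ Set.Icc (0:ℝ) t, 0 ≤ f s) {s : ℝ}
    (hs : s ∈ Set.Icc (0:ℝ) t) : 0 ≤ ∫ u in (0:ℝ)..s, f u := by
  apply intervalIntegral.integral_nonneg hs.1
  intro u hu
  exact hf u ⟨hu.1, hu.2.trans hs.2⟩

private lemma gron_aux (ht : 0 ≤ t) {f' h : ℝ → ℝ}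
    (hf : ContinuousOn f (Set.Icc 0 t))
    (hh : ContinuousOn h (Set.Icc 0 t))
    (hh0 : ∀ s ∈ Set.Icc (0:ℝ) t, 0 ≤ h s)
    (hd : ∀ s ∈ Set.Ioo (0:ℝ) t, HasDerivAt f (f' s) s)
    (hle : ∀ s ∈ Set.Ioo (0:ℝ) t, f' s ≤ f s + h s) :
    f t ≤ Real.exp t * (f 0 + ∫ s in (0:ℝ)..t, h s) := by
  rcases eq_or_lt_of_le ht with rfl | ht'
  · simp
  set φ : ℝ → ℝ := fun s => Real.exp (-s) * f s - ∫ u in (0:ℝ)..s, Real.exp (-u) * h u with hφ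
  have hc : ContinuousOn (fun u => Real.exp (-u) * h u) (Set.Icc 0 t) :=
    (Real.continuous_exp.comp continuous_neg).continuousOn.mul hh
  have hφcont : ContinuousOn φ (Set.Icc 0 t) :=
    ((Real.continuous_exp.comp continuous_neg).continuousOn.mul hf).sub (prim_cont ht hc)
  have hds : ∀ s ∈ Set.Ioo (0:ℝ) t, HasDerivAt φ (Real.exp (-s) * (f' s - f s - h s)) s := by
    intro s hs
    have he : HasDerivAt (fun s : ℝ => Real.exp (-s)) (-Real.exp (-s)) s := by
      simpa [Function.comp_def] using (Real.hasDerivAt_exp (-s)).comp s (hasDerivAt_neg s)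
    have h1 : HasDerivAt (fun s => Real.exp (-s) * f s)
        (-Real.exp (-s) * f s + Real.exp (-s) * f' s) s := he.mul (hd s hs)
    have h3 := h1.sub (prim_deriv ht hc hs)
    exact h3.congr_deriv (by ring)
  have hφmono : AntitoneOn φ (Set.Icc 0 t) := by
    apply antitoneOn_of_deriv_nonpos (convex_Icc 0 t) hφcont
    · intro s hs
      rw [interior_Icc] at hs
      exact (hds s hs).differentiableAt.differentiableWithinAt
    · intro s hs
      rw [interior_Icc] at hs
      rw [(hds s hs).deriv]
      have hle' := hle s hs
      have hexp : 0 < Real.exp (-s) := Real.exp_pos _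
      nlinarith
  have key : φ t ≤ φ 0 := hφmono (Set.left_mem_Icc.2 ht) (Set.right_mem_Icc.2 ht) ht
  have hφ0 : φ 0 = f 0 := by simp [hφ]
  have h4 : Real.exp (-t) * f t ≤ f 0 + ∫ u in (0:ℝ)..t, Real.exp (-u) * h u := by
    rw [hφ0] at key; simp only [hφ] at key; linarith
  have h5 : (∫ u in (0:ℝ)..t, Real.exp (-u) * h u) ≤ ∫ u in (0:ℝ)..t, h u := by
    apply intervalIntegral.integral_mono_on ht (prim_ii ht hc) (prim_ii ht hh)
    intro u hu
    have h1 : Real.exp (-u) ≤ 1 := Real.exp_le_one_iff.2 (by linarith [hu.1])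
    nlinarith [hh0 u hu]
  have h6 : f t = Real.exp t * (Real.exp (-t) * f t) := by
    rw [← mul_assoc, ← Real.exp_add]; simp
  rw [h6]
  exact mul_le_mul_of_nonneg_left (le_trans h4 (by linarith)) (Real.exp_pos t).le

end gronwallHelpers

/-- Lemma 2.2: additional parabolic estimate for a time-regular right-hand side,
for the semi-discrete problem `w' = b₀ A w - ν w + g` under the discrete
Poincaré inequality `-⟪A ψ, ψ⟫ ≥ λ ‖ψ‖²`. The constant `C` depends only on
`b₀`, `ν` and `λ` (in particular it is independent of `V`, `A`, `T`, `g`, `w`).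
Here `a(ψ,φ) = -⟪A ψ, φ⟫` abstracts the Dirichlet form, and `A` the discrete
Laplacian `Δ_h` on the finite element space. -/
theorem parabolic_estimate_regular_rhs
    (b₀ ν lam : ℝ) (hb₀ : 0 < b₀) (hν : 0 ≤ ν) (hlam : 0 < lam) :
    ∃ C > 0,
      ∀ (V : Type*) [NormedAddCommGroup V] [InnerProductSpace ℝ V]
        [FiniteDimensional ℝ V] (A : V →ₗ[ℝ] V),
        (∀ ψ φ : V, ⟪A ψ, φ⟫ = ⟪ψ, A φ⟫) →
        (∀ ψ : V, ⟪A ψ, ψ⟫ ≤ 0) →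
        (∀ ψ : V, lam * ‖ψ‖^2 ≤ -⟪A ψ, ψ⟫) →
        ∀ (T : ℝ), 0 < T →
        ∀ (g g' w w' : ℝ → V),
          (∀ s ∈ Set.Icc (0:ℝ) T, HasDerivAt g (g' s) s) →
          ContinuousOn g' (Set.Icc 0 T) →
          (∀ s ∈ Set.Icc (0:ℝ) T, HasDerivAt w (w' s) s) →
          ContinuousOn w' (Set.Icc 0 T) →
          (∀ s ∈ Set.Icc (0:ℝ) T, w' s = b₀ • A (w s) - ν • w s + g s) →
          ∀ t ∈ Set.Icc (0:ℝ) T,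
            ‖w' t‖^2 + (∫ s in (0:ℝ)..t, -⟪A (w' s), w' s⟫)
              + (b₀/2) * ‖A (w t)‖^2 + (ν/2) * (-⟪A (w t), w t⟫)
              ≤ C * Real.exp (C * t) *
                  ((⨆ s : Set.Icc (0:ℝ) t, ‖g s.1‖^2)
                    + (∫ s in (0:ℝ)..t, (‖g s‖^2 + ‖g' s‖^2))
                    + ‖A (w 0)‖^2 + (-⟪A (w 0), w 0⟫)) := by
  -- the constants
  set C₁ : ℝ := 3*b₀^2 + 3*ν^2/lam^2 + 3 with hC₁
  set C₂ : ℝ := 1/lam^2 + 1 with hC₂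
  set C₃ : ℝ := (3/b₀^2) * (C₁ + ν^2*C₂ + 1) with hC₃
  set C₄ : ℝ := (C₃ + C₂)/2 with hC₄
  set C : ℝ := C₁ + C₁/(2*b₀) + (b₀/2)*C₃ + (ν/2)*C₄ + 1 with hC
  clear_value C C₄ C₃ C₂ C₁
  have hC₁3 : 3 ≤ C₁ := by
    rw [hC₁]
    have h1 : 0 ≤ 3*b₀^2 := by positivity
    have h2 : 0 ≤ 3*ν^2/lam^2 := by positivity
    linarith
  have hC₁pos : 0 < C₁ := by linarith
  have hC₂pos : 0 < C₂ := by rw [hC₂]; positivity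
  have hC₃pos : 0 < C₃ := by
    rw [hC₃]
    have h1 : 0 < C₁ + ν^2*C₂ + 1 := by nlinarith [mul_nonneg (sq_nonneg ν) hC₂pos.le]
    positivity
  have hC₄pos : 0 < C₄ := by rw [hC₄]; positivity
  have hC1 : 1 ≤ C := by
    have h1 : 0 < C₁/(2*b₀) := by positivity
    have h2 : 0 ≤ (b₀/2)*C₃ := by positivity
    have h3 : 0 ≤ (ν/2)*C₄ := by positivity
    rw [hC]; linarith
  have hCpos : 0 < C := by linarith
  refine ⟨C, hCpos, ?_⟩
  intro V _ _ _ A hsym hneg hpo T hT g g' w w' hg hg'c hw hw'c heqn t ht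
  obtain ⟨ht0, htT⟩ := ht
  have hsub : Set.Icc (0:ℝ) t ⊆ Set.Icc 0 T := Set.Icc_subset_Icc le_rfl htT
  have hsub' : Set.Ioo (0:ℝ) t ⊆ Set.Ioo 0 T := Set.Ioo_subset_Ioo le_rfl htT
  have h0T : (0:ℝ) ∈ Set.Icc (0:ℝ) T := Set.left_mem_Icc.2 hT.le
  have htTmem : t ∈ Set.Icc (0:ℝ) T := ⟨ht0, htT⟩
  -- continuity
  have hAc : Continuous fun v : V => A v := A.continuous_of_finiteDimensional
  have hwc : ContinuousOn w (Set.Icc 0 T) := fun s hs => ((hw s hs).continuousAt).continuousWithinAt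
  have hgc : ContinuousOn g (Set.Icc 0 T) := fun s hs => ((hg s hs).continuousAt).continuousWithinAt
  have hw'ct : ContinuousOn w' (Set.Icc 0 t) := hw'c.mono hsub
  have ha'c : ContinuousOn (fun s => -⟪A (w' s), w' s⟫) (Set.Icc 0 t) :=
    (((hAc.comp_continuousOn hw'ct).inner hw'ct)).neg
  -- derivative of w'
  have hw'd : ∀ s ∈ Set.Ioo (0:ℝ) T, HasDerivAt w' (b₀ • A (w' s) - ν • w' s + g' s) s := by
    intro s hs
    have hsI : s ∈ Set.Icc (0:ℝ) T := Set.Ioo_subset_Icc_self hs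
    have hAw : HasDerivAt (fun u => A (w u)) (A (w' s)) s := by
      have := (LinearMap.toContinuousLinearMap A).hasFDerivAt.comp_hasDerivAt s (hw s hsI)
      simpa [Function.comp_def] using this
    have hrhs : HasDerivAt (fun u => b₀ • A (w u) - ν • w u + g u)
        (b₀ • A (w' s) - ν • w' s + g' s) s :=
      ((hAw.const_smul b₀).sub ((hw s hsI).const_smul ν)).add (hg s hsI)
    apply hrhs.congr_of_eventuallyEq
    filter_upwards [Icc_mem_nhds hs.1 (lt_of_lt_of_le hs.2 le_rfl)] with u hu
    exact heqn u hu
  -- nonnegativity of the dissipation integrand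
  have ha'nn : ∀ u ∈ Set.Icc (0:ℝ) t, 0 ≤ -⟪A (w' u), w' u⟫ := fun u _ => by
    have := hneg (w' u); linarith
  -- Step 1: Gronwall for ‖w'‖² + 2b₀ ∫ a(w',w')
  have gr1 : ‖w' t‖^2 + (2*b₀) * (∫ u in (0:ℝ)..t, -⟪A (w' u), w' u⟫)
      ≤ Real.exp t * (‖w' 0‖^2 + ∫ s in (0:ℝ)..t, ‖g' s‖^2) := by
    have hgron := gron_aux ht0
      (f := fun s => ‖w' s‖^2 + (2*b₀) * ∫ u in (0:ℝ)..s, -⟪A (w' u), w' u⟫)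
      (f' := fun s => (⟪w' s, b₀ • A (w' s) - ν • w' s + g' s⟫
          + ⟪b₀ • A (w' s) - ν • w' s + g' s, w' s⟫) + (2*b₀) * (-⟪A (w' s), w' s⟫))
      (h := fun s => ‖g' s‖^2)
      ((hw'ct.norm.pow 2).add (continuousOn_const.mul (prim_cont ht0 ha'c)))
      (((hg'c.mono hsub).norm).pow 2)
      (fun s _ => by positivity)
      ?_ ?_
    · simpa using hgron
    · intro s hs
      have h1 : HasDerivAt (fun u => ⟪w' u, w' u⟫)
          (⟪w' s, b₀ • A (w' s) - ν • w' s + g' s⟫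
            + ⟪b₀ • A (w' s) - ν • w' s + g' s, w' s⟫) s :=
        (hw'd s (hsub' hs)).inner ℝ (hw'd s (hsub' hs))
      have h2 := ((prim_deriv ht0 ha'c hs).const_mul (2*b₀))
      simp only [← real_inner_self_eq_norm_sq]
      exact h1.add h2
    · intro s hs
      have hsI : s ∈ Set.Icc (0:ℝ) t := Set.Ioo_subset_Icc_self hs
      have e2 : ⟪w' s, b₀ • A (w' s) - ν • w' s + g' s⟫
          = ⟪b₀ • A (w' s) - ν • w' s + g' s, w' s⟫ := real_inner_comm _ _
      have e1 : ⟪b₀ • A (w' s) - ν • w' s + g' s, w' s⟫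
          = b₀ * ⟪A (w' s), w' s⟫ - ν * ⟪w' s, w' s⟫ + ⟪g' s, w' s⟫ := by
        simp [inner_add_left, inner_sub_left, real_inner_smul_left]
      have hIs : 0 ≤ ∫ u in (0:ℝ)..s, -⟪A (w' u), w' u⟫ := prim_nonneg ht0 ha'nn hsI
      have hcs : ⟪g' s, w' s⟫ ≤ ‖g' s‖ * ‖w' s‖ := real_inner_le_norm _ _
      have hni : ⟪w' s, w' s⟫ = ‖w' s‖^2 := real_inner_self_eq_norm_sq _
      have hAneg : ⟪A (w' s), w' s⟫ ≤ 0 := hneg _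
      beta_reduce
      rw [e2, e1]
      nlinarith [sq_nonneg (‖g' s‖ - ‖w' s‖), norm_nonneg (w' s), norm_nonneg (g' s),
        mul_nonneg hν (sq_nonneg ‖w' s‖), mul_pos hb₀ hb₀]
  -- Step 2: Gronwall for ‖w‖²
  have gr2 : ‖w t‖^2 ≤ Real.exp t * (‖w 0‖^2 + ∫ s in (0:ℝ)..t, ‖g s‖^2) := by
    have hgron := gron_aux ht0
      (f := fun s => ‖w s‖^2)
      (f' := fun s => ⟪w s, w' s⟫ + ⟪w' s, w s⟫)
      (h := fun s => ‖g s‖^2)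
      ((hwc.mono hsub).norm.pow 2)
      (((hgc.mono hsub).norm).pow 2)
      (fun s _ => by positivity)
      ?_ ?_
    · simpa using hgron
    · intro s hs
      simp only [← real_inner_self_eq_norm_sq]
      exact (hw s (hsub (Set.Ioo_subset_Icc_self hs))).inner ℝ
        (hw s (hsub (Set.Ioo_subset_Icc_self hs)))
    · intro s hs
      have hsI : s ∈ Set.Icc (0:ℝ) T := hsub (Set.Ioo_subset_Icc_self hs)
      have e2 : ⟪w s, w' s⟫ = ⟪w' s, w s⟫ := real_inner_comm _ _
      have e1 : ⟪w' s, w s⟫ = b₀ * ⟪A (w s), w s⟫ - ν * ⟪w s, w s⟫ + ⟪g s, w s⟫ := by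
        rw [heqn s hsI]
        simp [inner_add_left, inner_sub_left, real_inner_smul_left]
      have hcs : ⟪g s, w s⟫ ≤ ‖g s‖ * ‖w s‖ := real_inner_le_norm _ _
      have hni : ⟪w s, w s⟫ = ‖w s‖^2 := real_inner_self_eq_norm_sq _
      have hAneg : ⟪A (w s), w s⟫ ≤ 0 := hneg _
      beta_reduce
      rw [e2, e1]
      nlinarith [sq_nonneg (‖g s‖ - ‖w s‖), mul_nonneg hν (sq_nonneg ‖w s‖),
        mul_nonneg hb₀.le (neg_nonneg.2 hAneg)]
  -- Poincaré consequence
  have hP : ∀ ψ : V, lam * ‖ψ‖ ≤ ‖A ψ‖ := by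
    intro ψ
    rcases eq_or_lt_of_le (norm_nonneg ψ) with h0 | h0
    · rw [← h0]; simpa using norm_nonneg (A ψ)
    · have h1 := hpo ψ
      have h2 : -⟪A ψ, ψ⟫ ≤ ‖A ψ‖ * ‖ψ‖ := by
        have ha := abs_real_inner_le_norm (A ψ) ψ
        have hb := neg_abs_le (⟪A ψ, ψ⟫ : ℝ)
        linarith only [ha, hb]
      refine le_of_mul_le_mul_right ?_ h0
      calc lam * ‖ψ‖ * ‖ψ‖ = lam * ‖ψ‖^2 := by ring
        _ ≤ -⟪A ψ, ψ⟫ := h1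
        _ ≤ ‖A ψ‖ * ‖ψ‖ := h2
  have hA0 : lam^2 * ‖w 0‖^2 ≤ ‖A (w 0)‖^2 := by
    have h := mul_self_le_mul_self (mul_nonneg hlam.le (norm_nonneg (w 0))) (hP (w 0))
    calc lam^2 * ‖w 0‖^2 = (lam * ‖w 0‖) * (lam * ‖w 0‖) := by ring
      _ ≤ ‖A (w 0)‖ * ‖A (w 0)‖ := h
      _ = ‖A (w 0)‖^2 := by ring
  -- supremum bound
  have hbdd : BddAbove (Set.range fun s : Set.Icc (0:ℝ) t => ‖g s.1‖^2) := by
    have hcomp : (Set.range fun s : Set.Icc (0:ℝ) t => ‖g s.1‖^2)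
        = (fun s => ‖g s‖^2) '' Set.Icc 0 t := by
      ext x
      constructor
      · rintro ⟨⟨s, hs⟩, rfl⟩; exact ⟨s, hs, rfl⟩
      · rintro ⟨s, hs, rfl⟩; exact ⟨⟨s, hs⟩, rfl⟩
    rw [hcomp]
    exact ((isCompact_Icc).image_of_continuousOn (((hgc.mono hsub).norm).pow 2)).bddAbove
  set S : ℝ := ⨆ s : Set.Icc (0:ℝ) t, ‖g s.1‖^2 with hSdef
  have hSb : ∀ s ∈ Set.Icc (0:ℝ) t, ‖g s‖^2 ≤ S := fun s hs => le_ciSup hbdd ⟨s, hs⟩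
  clear_value S
  have hS0 : 0 ≤ S := le_trans (by positivity) (hSb 0 (Set.left_mem_Icc.2 ht0))
  -- integral facts
  have hgsq : ContinuousOn (fun s => ‖g s‖^2) (Set.Icc 0 t) := ((hgc.mono hsub).norm).pow 2
  have hg'sq : ContinuousOn (fun s => ‖g' s‖^2) (Set.Icc 0 t) := ((hg'c.mono hsub).norm).pow 2
  have hIgg : (∫ s in (0:ℝ)..t, (‖g s‖^2 + ‖g' s‖^2))
      = (∫ s in (0:ℝ)..t, ‖g s‖^2) + ∫ s in (0:ℝ)..t, ‖g' s‖^2 :=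
    intervalIntegral.integral_add (prim_ii ht0 hgsq) (prim_ii ht0 hg'sq)
  have hIg0 : 0 ≤ ∫ s in (0:ℝ)..t, ‖g s‖^2 :=
    prim_nonneg ht0 (fun s _ => by positivity) (Set.right_mem_Icc.2 ht0)
  have hIg'0 : 0 ≤ ∫ s in (0:ℝ)..t, ‖g' s‖^2 :=
    prim_nonneg ht0 (fun s _ => by positivity) (Set.right_mem_Icc.2 ht0)
  have hI0 : 0 ≤ ∫ s in (0:ℝ)..t, -⟪A (w' s), w' s⟫ :=
    prim_nonneg ht0 ha'nn (Set.right_mem_Icc.2 ht0)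
  have ha0nn : 0 ≤ -⟪A (w 0), w 0⟫ := by linarith [hneg (w 0)]
  have hawtnn : 0 ≤ -⟪A (w t), w t⟫ := by linarith [hneg (w t)]
  set R : ℝ := S + (∫ s in (0:ℝ)..t, (‖g s‖^2 + ‖g' s‖^2)) + ‖A (w 0)‖^2
      + (-⟪A (w 0), w 0⟫) with hRdef
  clear_value R
  have hIggnn : 0 ≤ ∫ s in (0:ℝ)..t, (‖g s‖^2 + ‖g' s‖^2) := by rw [hIgg]; linarith
  have hR0 : 0 ≤ R := by rw [hRdef]; positivity
  have hAw0R : ‖A (w 0)‖^2 ≤ R := by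
    rw [hRdef]; linarith only [hS0, hIggnn, ha0nn]
  have hSR : S ≤ R := by
    rw [hRdef]; linarith only [hIggnn, ha0nn, sq_nonneg ‖A (w 0)‖]
  have hIggR : (∫ s in (0:ℝ)..t, (‖g s‖^2 + ‖g' s‖^2)) ≤ R := by
    rw [hRdef]; linarith only [hS0, ha0nn, sq_nonneg ‖A (w 0)‖]
  -- pointwise bounds from the equation
  have hw'0 : ‖w' 0‖ ≤ b₀*‖A (w 0)‖ + ν*‖w 0‖ + ‖g 0‖ := by
    rw [heqn 0 h0T]
    calc ‖b₀ • A (w 0) - ν • w 0 + g 0‖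
        ≤ ‖b₀ • A (w 0) - ν • w 0‖ + ‖g 0‖ := norm_add_le _ _
      _ ≤ ‖b₀ • A (w 0)‖ + ‖ν • w 0‖ + ‖g 0‖ := by
          linarith [norm_sub_le (b₀ • A (w 0)) (ν • w 0)]
      _ = b₀*‖A (w 0)‖ + ν*‖w 0‖ + ‖g 0‖ := by
          rw [norm_smul, norm_smul, Real.norm_eq_abs, Real.norm_eq_abs,
            abs_of_pos hb₀, abs_of_nonneg hν]
  have hAwtn : b₀*‖A (w t)‖ ≤ ‖w' t‖ + ν*‖w t‖ + ‖g t‖ := by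
    have hrw : b₀ • A (w t) = w' t + ν • w t - g t := by rw [heqn t htTmem]; abel
    calc b₀*‖A (w t)‖ = ‖b₀ • A (w t)‖ := by
          rw [norm_smul, Real.norm_eq_abs, abs_of_pos hb₀]
      _ = ‖w' t + ν • w t - g t‖ := by rw [hrw]
      _ ≤ ‖w' t + ν • w t‖ + ‖g t‖ := norm_sub_le _ _
      _ ≤ ‖w' t‖ + ‖ν • w t‖ + ‖g t‖ := by linarith [norm_add_le (w' t) (ν • w t)]
      _ = ‖w' t‖ + ν*‖w t‖ + ‖g t‖ := by
          rw [norm_smul, Real.norm_eq_abs, abs_of_nonneg hν]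
  set X : ℝ := Real.exp t * R with hXdef
  clear_value X
  have hexpt1 : (1:ℝ) ≤ Real.exp t := Real.one_le_exp ht0
  have hXR : R ≤ X := by rw [hXdef]; exact le_mul_of_one_le_left hR0 hexpt1
  have hX0 : 0 ≤ X := le_trans hR0 hXR
  -- bound on initial data + g' integral
  have hK : ‖w' 0‖^2 + (∫ s in (0:ℝ)..t, ‖g' s‖^2) ≤ C₁ * R := by
    have h1 : ‖w' 0‖^2 ≤ 3*(b₀^2*‖A (w 0)‖^2 + ν^2*‖w 0‖^2 + ‖g 0‖^2) := by
      have hdsq : ‖w' 0‖^2 ≤ (b₀*‖A (w 0)‖ + ν*‖w 0‖ + ‖g 0‖)^2 :=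
        pow_le_pow_left₀ (norm_nonneg _) hw'0 2
      linarith only [hdsq, sq_nonneg (b₀*‖A (w 0)‖ - ν*‖w 0‖),
        sq_nonneg (b₀*‖A (w 0)‖ - ‖g 0‖), sq_nonneg (ν*‖w 0‖ - ‖g 0‖)]
    have h2 : ν^2*‖w 0‖^2 ≤ (ν^2/lam^2) * ‖A (w 0)‖^2 := by
      rw [div_mul_eq_mul_div, le_div_iff₀ (by positivity)]
      linarith only [mul_le_mul_of_nonneg_left hA0 (sq_nonneg ν)]
    have h3 : ‖g 0‖^2 ≤ S := hSb 0 (Set.left_mem_Icc.2 ht0)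
    have h4 : (∫ s in (0:ℝ)..t, ‖g' s‖^2) ≤ ∫ s in (0:ℝ)..t, (‖g s‖^2 + ‖g' s‖^2) := by
      rw [hIgg]; linarith
    have e1 : (3*b₀^2 + 3*ν^2/lam^2) * ‖A (w 0)‖^2 ≤ C₁ * ‖A (w 0)‖^2 := by
      apply mul_le_mul_of_nonneg_right _ (sq_nonneg _)
      rw [hC₁]; linarith
    have e2 : 3 * S ≤ C₁ * S := mul_le_mul_of_nonneg_right hC₁3 hS0
    have e3 : 1 * (∫ s in (0:ℝ)..t, (‖g s‖^2 + ‖g' s‖^2))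
        ≤ C₁ * (∫ s in (0:ℝ)..t, (‖g s‖^2 + ‖g' s‖^2)) :=
      mul_le_mul_of_nonneg_right (by linarith only [hC₁3]) hIggnn
    have e4 : 0 ≤ C₁ * (-⟪A (w 0), w 0⟫) := mul_nonneg hC₁pos.le ha0nn
    have eR : C₁ * R = C₁ * S + C₁ * (∫ s in (0:ℝ)..t, (‖g s‖^2 + ‖g' s‖^2))
        + C₁ * ‖A (w 0)‖^2 + C₁ * (-⟪A (w 0), w 0⟫) := by rw [hRdef]; ring
    have h2' : 3 * (ν^2 * ‖w 0‖^2) ≤ 3 * (ν^2/lam^2 * ‖A (w 0)‖^2) := by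
      linarith only [h2]
    have e1' : 3*b₀^2*‖A (w 0)‖^2 + 3*(ν^2/lam^2 * ‖A (w 0)‖^2) ≤ C₁ * ‖A (w 0)‖^2 := by
      have hexp : (3*b₀^2 + 3*ν^2/lam^2) * ‖A (w 0)‖^2
          = 3*b₀^2*‖A (w 0)‖^2 + 3*(ν^2/lam^2 * ‖A (w 0)‖^2) := by ring
      linarith only [e1, hexp]
    linarith only [h1, h2', h3, h4, e1', e2, e3, e4, eR]
  -- consequences of gr1
  have hB1 : ‖w' t‖^2 + (2*b₀) * (∫ u in (0:ℝ)..t, -⟪A (w' u), w' u⟫) ≤ C₁ * X := by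
    calc ‖w' t‖^2 + (2*b₀) * (∫ u in (0:ℝ)..t, -⟪A (w' u), w' u⟫)
        ≤ Real.exp t * (‖w' 0‖^2 + ∫ s in (0:ℝ)..t, ‖g' s‖^2) := gr1
      _ ≤ Real.exp t * (C₁ * R) := mul_le_mul_of_nonneg_left hK (Real.exp_pos t).le
      _ = C₁ * X := by rw [hXdef]; ring
  have hw't : ‖w' t‖^2 ≤ C₁ * X := by
    have h := mul_nonneg (by linarith only [hb₀] : (0:ℝ) ≤ 2*b₀) hI0
    linarith only [h, hB1]
  have hIt : (∫ s in (0:ℝ)..t, -⟪A (w' s), w' s⟫) ≤ (C₁/(2*b₀)) * X := by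
    rw [div_mul_eq_mul_div, le_div_iff₀ (by linarith only [hb₀] : (0:ℝ) < 2*b₀)]
    linarith only [hB1, sq_nonneg ‖w' t‖]
  -- ‖w t‖² bound
  have hwt2 : ‖w t‖^2 ≤ C₂ * X := by
    have h2 : ‖w 0‖^2 ≤ (1/lam^2) * ‖A (w 0)‖^2 := by
      rw [div_mul_eq_mul_div, le_div_iff₀ (by positivity)]
      linarith only [hA0]
    have h4 : (∫ s in (0:ℝ)..t, ‖g s‖^2) ≤ ∫ s in (0:ℝ)..t, (‖g s‖^2 + ‖g' s‖^2) := by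
      rw [hIgg]; linarith
    have e1 : (1/lam^2) * ‖A (w 0)‖^2 ≤ (1/lam^2) * R :=
      mul_le_mul_of_nonneg_left hAw0R (by positivity)
    have hKR : ‖w 0‖^2 + (∫ s in (0:ℝ)..t, ‖g s‖^2) ≤ C₂ * R := by
      have eC : C₂ * R = (1/lam^2) * R + 1 * R := by rw [hC₂]; ring
      have e1' : 1/lam^2 * ‖A (w 0)‖^2 ≤ 1/lam^2 * R := e1
      linarith only [h2, h4, e1', eC, hIggR]
    calc ‖w t‖^2 ≤ Real.exp t * (‖w 0‖^2 + ∫ s in (0:ℝ)..t, ‖g s‖^2) := gr2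
      _ ≤ Real.exp t * (C₂ * R) := mul_le_mul_of_nonneg_left hKR (Real.exp_pos t).le
      _ = C₂ * X := by rw [hXdef]; ring
  have hgt : ‖g t‖^2 ≤ X := le_trans (hSb t (Set.right_mem_Icc.2 ht0)) (le_trans hSR hXR)
  -- ‖A (w t)‖² bound
  have hAwt2 : ‖A (w t)‖^2 ≤ C₃ * X := by
    have h1 : b₀^2 * ‖A (w t)‖^2 ≤ 3*(‖w' t‖^2 + ν^2*‖w t‖^2 + ‖g t‖^2) := by
      have hdsq : (b₀*‖A (w t)‖)^2 ≤ (‖w' t‖ + ν*‖w t‖ + ‖g t‖)^2 :=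
        pow_le_pow_left₀ (mul_nonneg hb₀.le (norm_nonneg _)) hAwtn 2
      linarith only [hdsq, sq_nonneg (‖w' t‖ - ν*‖w t‖),
        sq_nonneg (‖w' t‖ - ‖g t‖), sq_nonneg (ν*‖w t‖ - ‖g t‖)]
    have h2 : ν^2*‖w t‖^2 ≤ ν^2*(C₂*X) := mul_le_mul_of_nonneg_left hwt2 (sq_nonneg ν)
    have h3 : b₀^2 * ‖A (w t)‖^2 ≤ 3*(C₁ + ν^2*C₂ + 1)*X := by
      linarith only [h1, h2, hw't, hgt]
    have hb2 : b₀^2 * C₃ = 3*(C₁ + ν^2*C₂ + 1) := by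
      rw [hC₃]; field_simp
    have hb2X : b₀^2*(C₃*X) = 3*(C₁ + ν^2*C₂ + 1)*X := by rw [← hb2]; ring
    have h4 : b₀^2 * ‖A (w t)‖^2 ≤ b₀^2 * (C₃*X) := by linarith only [h3, hb2X]
    exact le_of_mul_le_mul_left h4 (by positivity)
  -- a(w t, w t) bound
  have hawt2 : -⟪A (w t), w t⟫ ≤ C₄ * X := by
    have h1 : -⟪A (w t), w t⟫ ≤ ‖A (w t)‖ * ‖w t‖ := by
      have ha := abs_real_inner_le_norm (A (w t)) (w t)
      have hb := neg_abs_le (⟪A (w t), w t⟫ : ℝ)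
      linarith only [ha, hb]
    have h2 : ‖A (w t)‖ * ‖w t‖ ≤ (‖A (w t)‖^2 + ‖w t‖^2)/2 := by
      linarith only [sq_nonneg (‖A (w t)‖ - ‖w t‖)]
    have e : C₄ * X = (C₃*X + C₂*X)/2 := by rw [hC₄]; ring
    linarith only [h1, h2, hAwt2, hwt2, e]
  -- final assembly
  have hsum : ‖w' t‖^2 + (∫ s in (0:ℝ)..t, -⟪A (w' s), w' s⟫)
      + (b₀/2) * ‖A (w t)‖^2 + (ν/2) * (-⟪A (w t), w t⟫)
      ≤ (C - 1) * X := by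
    have e1 : (b₀/2)*‖A (w t)‖^2 ≤ (b₀/2)*(C₃*X) :=
      mul_le_mul_of_nonneg_left hAwt2 (by linarith)
    have e2 : (ν/2)*(-⟪A (w t), w t⟫) ≤ (ν/2)*(C₄*X) :=
      mul_le_mul_of_nonneg_left hawt2 (by linarith)
    have e3 : (C - 1) * X
        = C₁*X + (C₁/(2*b₀))*X + (b₀/2)*(C₃*X) + (ν/2)*(C₄*X) := by
      rw [hC]; ring
    linarith only [hw't, hIt, e1, e2, e3]
  have hE : Real.exp t ≤ Real.exp (C*t) := by
    apply Real.exp_le_exp.2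
    linarith only [mul_nonneg (by linarith only [hC1] : (0:ℝ) ≤ C - 1) ht0, ht0]
  have h1 : (C-1) * X ≤ (C-1) * (Real.exp (C*t) * R) := by
    rw [hXdef]
    exact mul_le_mul_of_nonneg_left (mul_le_mul_of_nonneg_right hE hR0) (by linarith)
  have h2 : (C-1) * (Real.exp (C*t) * R) ≤ C * (Real.exp (C*t) * R) :=
    mul_le_mul_of_nonneg_right (by linarith) (mul_nonneg (Real.exp_pos _).le hR0)
  have h3 : C * Real.exp (C*t) * R = C * (Real.exp (C*t) * R) := by ring
  linarith only [hsum, h1, h2, h3]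
end

section
/- (Maximal regularity estimate for the strongly damped second-order problem; abstract form of the wave-subproblem estimate obtained from Lemma 2.1 with w = ∂ₜ e, displays (4.17)–(4.18).) Let β₀ > 0 and T > 0. There exists a constant C > 0, depending only on β₀ and T (in particular independent of V, A, F, e), with the following property: for every continuous F : [0,T] → V and every twice continuously differentiable e : [0,T] → V satisfying e''(s) = β₀·A e'(s) + F(s) for all s ∈ [0,T] (i.e. ⟨e''(s),φ⟩ + β₀·a(e'(s),φ) = ⟨F(s),φ⟩ for all φ ∈ V), one has for every t ∈ [0,T]: ∫₀ᵗ ‖e''(s)‖² ds + ∫₀ᵗ ‖A e'(s)‖² ds + sup_{s∈[0,t]} ‖A e(s)‖² + sup_{s∈[0,t]} a(e'(s),e'(s)) ≤ C·( ∫₀ᵗ ‖F(s)‖² ds + a(e'(0),e'(0)) + ‖A e(0)‖² ). -/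
open scoped RealInnerProductSpace

set_option maxHeartbeats 1600000 in
/-- Maximal regularity estimate for the strongly damped second-order problem
`e'' = β₀ A e' + F` (abstract form of the wave-subproblem estimate obtained
from Lemma 2.1 with `w = ∂ₜ e`; displays (4.17)–(4.18)). The constant `C`
depends only on `β₀` and `T` (in particular it is independent of `V`, `A`,
`F`, `e`). Here `a(ψ,φ) = -⟪A ψ, φ⟫` abstracts the Dirichlet form, and `A`
the discrete Laplacian `Δ_h` on the finite element space. -/
theorem maximal_regularity_damped_wave
    (β₀ T : ℝ) (hβ₀ : 0 < β₀) (hT : 0 < T) :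
    ∃ C > 0,
      ∀ (V : Type*) [NormedAddCommGroup V] [InnerProductSpace ℝ V]
        [FiniteDimensional ℝ V] (A : V →ₗ[ℝ] V),
        (∀ ψ φ : V, ⟪A ψ, φ⟫ = ⟪ψ, A φ⟫) →
        (∀ ψ : V, ⟪A ψ, ψ⟫ ≤ 0) →
        ∀ (F e e' e'' : ℝ → V),
          ContinuousOn F (Set.Icc 0 T) →
          (∀ s ∈ Set.Icc (0:ℝ) T, HasDerivAt e (e' s) s) →
          (∀ s ∈ Set.Icc (0:ℝ) T, HasDerivAt e' (e'' s) s) →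
          ContinuousOn e'' (Set.Icc 0 T) →
          (∀ s ∈ Set.Icc (0:ℝ) T, e'' s = β₀ • A (e' s) + F s) →
          ∀ t ∈ Set.Icc (0:ℝ) T,
            (∫ s in (0:ℝ)..t, ‖e'' s‖^2)
              + (∫ s in (0:ℝ)..t, ‖A (e' s)‖^2)
              + (⨆ s : Set.Icc (0:ℝ) t, ‖A (e s.1)‖^2)
              + (⨆ s : Set.Icc (0:ℝ) t, -⟪A (e' s.1), e' s.1⟫)
              ≤ C * ((∫ s in (0:ℝ)..t, ‖F s‖^2)
                  + (-⟪A (e' 0), e' 0⟫) + ‖A (e 0)‖^2) := by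
  refine ⟨β₀ + 3 + β₀⁻¹ + (2 + 4*T) * (β₀ + 2) * (β₀⁻¹)^2, by positivity, ?_⟩
  intro V _ _ _ A hsym hneg F e e' e'' hFc hde hde' he''c heq t ht
  obtain ⟨ht0, htT⟩ := ht
  have hb0 : 0 < β₀⁻¹ := inv_pos.mpr hβ₀
  have hIccsub : Set.Icc (0:ℝ) t ⊆ Set.Icc 0 T := Set.Icc_subset_Icc le_rfl htT
  have hAc : Continuous A := A.continuous_of_finiteDimensional
  have he'c : ContinuousOn e' (Set.Icc 0 T) :=
    fun s hs => ((hde' s hs).continuousAt).continuousWithinAt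
  have huIcc : ∀ s ∈ Set.Icc (0:ℝ) t, Set.uIcc (0:ℝ) s ⊆ Set.Icc 0 T := by
    intro s hs
    rw [Set.uIcc_of_le hs.1]
    exact Set.Icc_subset_Icc le_rfl (hs.2.trans htT)
  have ht_mem : t ∈ Set.Icc (0:ℝ) t := ⟨ht0, le_rfl⟩
  -- continuity of the integrands on Icc 0 T
  have hcF2 : ContinuousOn (fun u => ‖F u‖^2) (Set.Icc 0 T) := hFc.norm.pow 2
  have hce2 : ContinuousOn (fun u => ‖e'' u‖^2) (Set.Icc 0 T) := he''c.norm.pow 2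
  have hcAe' : ContinuousOn (fun u => A (e' u)) (Set.Icc 0 T) := hAc.comp_continuousOn he'c
  have hcAe'2 : ContinuousOn (fun u => ‖A (e' u)‖^2) (Set.Icc 0 T) := hcAe'.norm.pow 2
  have hcAe'n : ContinuousOn (fun u => ‖A (e' u)‖) (Set.Icc 0 T) := hcAe'.norm
  have hcip : ContinuousOn (fun u => ⟪A (e' u), e'' u⟫) (Set.Icc 0 T) := hcAe'.inner he''c
  have hc2ip : ContinuousOn (fun u => 2 * ⟪A (e' u), e'' u⟫) (Set.Icc 0 T) :=
    continuousOn_const.mul hcip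
  have hcFip : ContinuousOn (fun u => ⟪F u, e'' u⟫) (Set.Icc 0 T) := hFc.inner he''c
  have hint : ∀ (f : ℝ → ℝ), ContinuousOn f (Set.Icc 0 T) → ∀ s ∈ Set.Icc (0:ℝ) t,
      IntervalIntegrable f MeasureTheory.volume 0 s := fun f hf s hs =>
    (hf.mono (huIcc s hs)).intervalIntegrable
  -- derivative of the energy
  have hgderiv : ∀ s ∈ Set.Icc (0:ℝ) T,
      HasDerivAt (fun u => ⟪A (e' u), e' u⟫) (2 * ⟪A (e' s), e'' s⟫) s := by
    intro s hs
    have hA : HasDerivAt (fun u => A (e' u)) (A (e'' s)) s :=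
      (A.toContinuousLinearMap).hasFDerivAt.comp_hasDerivAt s (hde' s hs)
    have h2 := HasDerivAt.inner ℝ hA (hde' s hs)
    have h1 : ⟪A (e'' s), e' s⟫ = ⟪A (e' s), e'' s⟫ := by
      rw [hsym]; exact real_inner_comm _ _
    exact h2.congr_deriv (by rw [h1]; ring)
  have hftcg : ∀ s ∈ Set.Icc (0:ℝ) t,
      (∫ u in (0:ℝ)..s, 2 * ⟪A (e' u), e'' u⟫)
        = ⟪A (e' s), e' s⟫ - ⟪A (e' 0), e' 0⟫ := by
    intro s hs
    exact intervalIntegral.integral_eq_sub_of_hasDerivAt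
      (fun u hu => hgderiv u (huIcc s hs hu)) (hint _ hc2ip s hs)
  -- pointwise identity for ‖e''‖²
  have hptw : ∀ s ∈ Set.Icc (0:ℝ) T,
      ‖e'' s‖^2 = β₀ * ⟪A (e' s), e'' s⟫ + ⟪F s, e'' s⟫ := by
    intro s hs
    have h0 : ‖e'' s‖^2 = ⟪e'' s, e'' s⟫ := (real_inner_self_eq_norm_sq _).symm
    rw [h0]
    nth_rewrite 1 [heq s hs]
    rw [inner_add_left, real_inner_smul_left]
  -- the key energy estimate
  have key : ∀ s ∈ Set.Icc (0:ℝ) t,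
      (∫ u in (0:ℝ)..s, ‖e'' u‖^2) + β₀ * (-⟪A (e' s), e' s⟫)
        ≤ β₀ * (-⟪A (e' 0), e' 0⟫) + ∫ u in (0:ℝ)..s, ‖F u‖^2 := by
    intro s hs
    have hEq1 : (∫ u in (0:ℝ)..s, ‖e'' u‖^2)
        = (β₀/2) * (∫ u in (0:ℝ)..s, 2 * ⟪A (e' u), e'' u⟫)
          + ∫ u in (0:ℝ)..s, ⟪F u, e'' u⟫ := by
      rw [← intervalIntegral.integral_const_mul, ← intervalIntegral.integral_add
        ((hint _ hc2ip s hs).const_mul _) (hint _ hcFip s hs)]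
      apply intervalIntegral.integral_congr
      intro u hu
      have hu' : u ∈ Set.Icc (0:ℝ) T := huIcc s hs hu
      show ‖e'' u‖^2 = β₀/2 * (2 * ⟪A (e' u), e'' u⟫) + ⟪F u, e'' u⟫
      rw [hptw u hu']; ring
    have hbnd : (∫ u in (0:ℝ)..s, ⟪F u, e'' u⟫)
        ≤ ∫ u in (0:ℝ)..s, (‖F u‖^2/2 + ‖e'' u‖^2/2) := by
      apply intervalIntegral.integral_mono_on hs.1 (hint _ hcFip s hs)
        (((hint _ hcF2 s hs).div_const 2).add ((hint _ hce2 s hs).div_const 2))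
      intro u hu
      have hu' : u ∈ Set.Icc (0:ℝ) T :=
        huIcc s hs (by rw [Set.uIcc_of_le hs.1]; exact hu)
      have h1 := real_inner_le_norm (F u) (e'' u)
      nlinarith [sq_nonneg (‖F u‖ - ‖e'' u‖)]
    have hsplit : (∫ u in (0:ℝ)..s, (‖F u‖^2/2 + ‖e'' u‖^2/2))
        = (∫ u in (0:ℝ)..s, ‖F u‖^2)/2 + (∫ u in (0:ℝ)..s, ‖e'' u‖^2)/2 := by
      rw [intervalIntegral.integral_add ((hint _ hcF2 s hs).div_const 2)
        ((hint _ hce2 s hs).div_const 2), intervalIntegral.integral_div,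
        intervalIntegral.integral_div]
    rw [hftcg s hs] at hEq1
    rw [hsplit] at hbnd
    linarith
  set P := ∫ s in (0:ℝ)..t, ‖F s‖^2 with hPdef
  set Q := -⟪A (e' 0), e' 0⟫ with hQdef
  set R := ‖A (e 0)‖^2 with hRdef
  have hP0 : 0 ≤ P := intervalIntegral.integral_nonneg ht0 (fun u _ => sq_nonneg _)
  have hQ0 : 0 ≤ Q := neg_nonneg.mpr (hneg _)
  have hR0 : 0 ≤ R := sq_nonneg _
  clear_value P Q R
  -- monotonicity of integrals of nonnegative integrands
  have hmono : ∀ (f : ℝ → ℝ), ContinuousOn f (Set.Icc 0 T) → (∀ u, 0 ≤ f u) →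
      ∀ s ∈ Set.Icc (0:ℝ) t, (∫ u in (0:ℝ)..s, f u) ≤ ∫ u in (0:ℝ)..t, f u := by
    intro f hf hf0 s hs
    have h1 : IntervalIntegrable f MeasureTheory.volume 0 s := hint f hf s hs
    have h2 : IntervalIntegrable f MeasureTheory.volume s t := by
      apply (hf.mono ?_).intervalIntegrable
      rw [Set.uIcc_of_le hs.2]
      exact Set.Icc_subset_Icc hs.1 htT
    have h3 : 0 ≤ ∫ u in s..t, f u :=
      intervalIntegral.integral_nonneg hs.2 (fun u _ => hf0 u)
    have h4 := intervalIntegral.integral_add_adjacent_intervals h1 h2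
    linarith [h4.symm.le, h4.le]
  have hI : (∫ s in (0:ℝ)..t, ‖e'' s‖^2) ≤ β₀ * Q + P := by
    have h1 := key t ht_mem
    have h2 : 0 ≤ -⟪A (e' t), e' t⟫ := neg_nonneg.mpr (hneg _)
    nlinarith [mul_nonneg hβ₀.le h2]
  have hsup4 : ∀ s ∈ Set.Icc (0:ℝ) t, -⟪A (e' s), e' s⟫ ≤ Q + P * β₀⁻¹ := by
    intro s hs
    have hk := key s hs
    have h1 : 0 ≤ ∫ u in (0:ℝ)..s, ‖e'' u‖^2 :=
      intervalIntegral.integral_nonneg hs.1 (fun u _ => sq_nonneg _)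
    have h2 : (∫ u in (0:ℝ)..s, ‖F u‖^2) ≤ P := by
      rw [hPdef]; exact hmono _ hcF2 (fun u => sq_nonneg _) s hs
    have h3 : β₀ * (-⟪A (e' s), e' s⟫) ≤ β₀ * Q + P := by linarith
    have h4 := mul_le_mul_of_nonneg_left h3 hb0.le
    calc -⟪A (e' s), e' s⟫ = β₀⁻¹ * (β₀ * (-⟪A (e' s), e' s⟫)) := by
          rw [← mul_assoc, inv_mul_cancel₀ hβ₀.ne', one_mul]
      _ ≤ β₀⁻¹ * (β₀ * Q + P) := h4
      _ = Q + P * β₀⁻¹ := by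
          rw [mul_add, ← mul_assoc, inv_mul_cancel₀ hβ₀.ne', one_mul, mul_comm β₀⁻¹ P]
  -- bound on ∫ ‖A e'‖²
  have hptw2 : ∀ u ∈ Set.Icc (0:ℝ) t, β₀^2 * ‖A (e' u)‖^2 ≤ 2*‖e'' u‖^2 + 2*‖F u‖^2 := by
    intro u hu
    have hu' := hIccsub hu
    have h1 : β₀ • A (e' u) = e'' u - F u := by rw [heq u hu']; abel
    have h2 : ‖β₀ • A (e' u)‖ = β₀ * ‖A (e' u)‖ := by
      rw [norm_smul, Real.norm_of_nonneg hβ₀.le]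
    have h3 : β₀ * ‖A (e' u)‖ ≤ ‖e'' u‖ + ‖F u‖ := by
      rw [← h2, h1]; exact norm_sub_le _ _
    nlinarith [norm_nonneg (A (e' u)), norm_nonneg (e'' u), norm_nonneg (F u),
      mul_nonneg hβ₀.le (norm_nonneg (A (e' u))), sq_nonneg (‖e'' u‖ - ‖F u‖)]
  set J := ∫ s in (0:ℝ)..t, ‖A (e' s)‖^2 with hJdef
  have hJ0 : 0 ≤ J := intervalIntegral.integral_nonneg ht0 (fun u _ => sq_nonneg _)
  clear_value J
  have hJ : β₀^2 * J ≤ 2 * (∫ s in (0:ℝ)..t, ‖e'' s‖^2) + 2 * P := by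
    have h1 : (∫ u in (0:ℝ)..t, β₀^2 * ‖A (e' u)‖^2)
        ≤ ∫ u in (0:ℝ)..t, (2*‖e'' u‖^2 + 2*‖F u‖^2) :=
      intervalIntegral.integral_mono_on ht0 ((hint _ hcAe'2 t ht_mem).const_mul _)
        (((hint _ hce2 t ht_mem).const_mul 2).add ((hint _ hcF2 t ht_mem).const_mul 2)) hptw2
    rw [intervalIntegral.integral_const_mul,
      intervalIntegral.integral_add ((hint _ hce2 t ht_mem).const_mul 2)
        ((hint _ hcF2 t ht_mem).const_mul 2),
      intervalIntegral.integral_const_mul, intervalIntegral.integral_const_mul] at h1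
    rw [hJdef, hPdef]
    exact h1
  -- FTC for A ∘ e
  have hftcA : ∀ s ∈ Set.Icc (0:ℝ) t,
      (∫ u in (0:ℝ)..s, A (e' u)) = A (e s) - A (e 0) := by
    intro s hs
    apply intervalIntegral.integral_eq_sub_of_hasDerivAt
      (f := fun u => A (e u))
    · intro u hu
      exact (A.toContinuousLinearMap).hasFDerivAt.comp_hasDerivAt u
        (hde u (huIcc s hs hu))
    · exact (hcAe'.mono (huIcc s hs)).intervalIntegrable
  set K := ∫ s in (0:ℝ)..t, ‖A (e' s)‖ with hKdef
  have hK0 : 0 ≤ K := intervalIntegral.integral_nonneg ht0 (fun u _ => norm_nonneg _)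
  clear_value K
  have hCS : K^2 ≤ T * J := by
    rcases eq_or_lt_of_le ht0 with ht' | ht'
    · have hK' : K = 0 := by rw [hKdef, ← ht', intervalIntegral.integral_same]
      nlinarith [mul_nonneg hT.le hJ0]
    · have hεK : ∀ ε : ℝ, 0 < ε → 2 * ε * K ≤ ε^2 * t + J := by
        intro ε hε
        have hpt : ∀ u ∈ Set.Icc (0:ℝ) t,
            2 * ε * ‖A (e' u)‖ ≤ ε^2 + ‖A (e' u)‖^2 := by
          intro u hu; nlinarith [sq_nonneg (ε - ‖A (e' u)‖)]
        have h5 := intervalIntegral.integral_mono_on ht0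
          ((hint _ hcAe'n t ht_mem).const_mul (2*ε))
          (intervalIntegrable_const.add (hint _ hcAe'2 t ht_mem)) hpt
        rw [intervalIntegral.integral_const_mul,
          intervalIntegral.integral_add intervalIntegrable_const
            (hint _ hcAe'2 t ht_mem),
          intervalIntegral.integral_const] at h5
        simp only [smul_eq_mul, sub_zero] at h5
        rw [← hKdef, ← hJdef] at h5
        nlinarith
      rcases eq_or_lt_of_le hK0 with hK' | hK'
      · nlinarith [mul_nonneg hT.le hJ0]
      · have h6 := hεK (K/t) (by positivity)
        have h7 : (K/t)^2 * t = K^2/t := by field_simp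
        rw [h7] at h6
        have h8 : K^2/t ≤ J := by
          have : 2 * (K/t) * K = 2 * (K^2/t) := by field_simp
          rw [this] at h6; linarith
        calc K^2 = t * (K^2/t) := by field_simp
          _ ≤ t * J := mul_le_mul_of_nonneg_left h8 ht0
          _ ≤ T * J := mul_le_mul_of_nonneg_right htT hJ0
  have hsup3 : ∀ s ∈ Set.Icc (0:ℝ) t, ‖A (e s)‖^2 ≤ 2*R + 2*(T*J) := by
    intro s hs
    have h2 := hftcA s hs
    have h3 : ‖A (e s) - A (e 0)‖ ≤ ∫ u in (0:ℝ)..s, ‖A (e' u)‖ := by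
      rw [← h2]; exact intervalIntegral.norm_integral_le_integral_norm hs.1
    have h4 : (∫ u in (0:ℝ)..s, ‖A (e' u)‖) ≤ K := by
      rw [hKdef]; exact hmono _ hcAe'n (fun u => norm_nonneg _) s hs
    have h5 := norm_sub_norm_le (A (e s)) (A (e 0))
    have h1 : ‖A (e s)‖ ≤ ‖A (e 0)‖ + K := by linarith
    have h6 : ‖A (e s)‖^2 ≤ (‖A (e 0)‖ + K)^2 :=
      pow_le_pow_left₀ (norm_nonneg _) h1 2
    rw [hRdef]
    linarith [hCS, sq_nonneg (‖A (e 0)‖ - K), h6, sq_nonneg (‖A (e 0)‖ + K)]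
  have hne : Nonempty (Set.Icc (0:ℝ) t) := ⟨⟨0, le_rfl, ht0⟩⟩
  have hS3 : (⨆ s : Set.Icc (0:ℝ) t, ‖A (e s.1)‖^2) ≤ 2*R + 2*(T*J) :=
    ciSup_le (fun s => hsup3 s.1 s.2)
  have hS4 : (⨆ s : Set.Icc (0:ℝ) t, -⟪A (e' s.1), e' s.1⟫) ≤ Q + P * β₀⁻¹ :=
    ciSup_le (fun s => hsup4 s.1 s.2)
  -- combine
  have hJ' : J ≤ (2*(β₀*Q + P) + 2*P) * β₀⁻¹^2 := by
    have h1 : β₀^2 * J ≤ 2*(β₀*Q + P) + 2*P := by linarith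
    have h2 := mul_le_mul_of_nonneg_right h1 (sq_nonneg β₀⁻¹)
    calc J = β₀^2 * J * β₀⁻¹^2 := by field_simp
      _ ≤ _ := h2
  have hTJ : T * J ≤ T * ((2*(β₀*Q + P) + 2*P) * β₀⁻¹^2) :=
    mul_le_mul_of_nonneg_left hJ' hT.le
  have hRHS : (∫ s in (0:ℝ)..t, ‖e'' s‖^2) + J
      + (⨆ s : Set.Icc (0:ℝ) t, ‖A (e s.1)‖^2)
      + (⨆ s : Set.Icc (0:ℝ) t, -⟪A (e' s.1), e' s.1⟫)
      ≤ Q*(β₀ + 1 + 2*β₀*β₀⁻¹^2 + 4*T*β₀*β₀⁻¹^2)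
        + P*(1 + β₀⁻¹ + 4*β₀⁻¹^2 + 8*T*β₀⁻¹^2) + 2*R := by
    linarith [hI, hS3, hS4, hTJ, hJ']
  have e1 : (β₀ + 3 + β₀⁻¹ + (2 + 4*T) * (β₀ + 2) * (β₀⁻¹)^2)*(P + Q + R)
      - (Q*(β₀ + 1 + 2*β₀*β₀⁻¹^2 + 4*T*β₀*β₀⁻¹^2)
        + P*(1 + β₀⁻¹ + 4*β₀⁻¹^2 + 8*T*β₀⁻¹^2) + 2*R)
      = Q*(2 + β₀⁻¹ + 4*β₀⁻¹^2 + 8*T*β₀⁻¹^2)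
        + P*(β₀ + 2 + 2*β₀*β₀⁻¹^2 + 4*T*β₀*β₀⁻¹^2)
        + R*(β₀ + 1 + β₀⁻¹ + 2*β₀*β₀⁻¹^2 + 4*β₀⁻¹^2 + 4*T*β₀*β₀⁻¹^2 + 8*T*β₀⁻¹^2) := by
    ring
  have a1 : (0:ℝ) ≤ β₀*β₀⁻¹^2 := mul_nonneg hβ₀.le (sq_nonneg _)
  have a2 : (0:ℝ) ≤ T*β₀*β₀⁻¹^2 := mul_nonneg (mul_nonneg hT.le hβ₀.le) (sq_nonneg _)
  have a3 : (0:ℝ) ≤ T*β₀⁻¹^2 := mul_nonneg hT.le (sq_nonneg _)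
  have hc1 : (0:ℝ) ≤ 2 + β₀⁻¹ + 4*β₀⁻¹^2 + 8*T*β₀⁻¹^2 := by
    linarith [hb0.le, sq_nonneg β₀⁻¹, a3]
  have hc2 : (0:ℝ) ≤ β₀ + 2 + 2*β₀*β₀⁻¹^2 + 4*T*β₀*β₀⁻¹^2 := by
    linarith [hβ₀.le, a1, a2]
  have hc3 : (0:ℝ) ≤ β₀ + 1 + β₀⁻¹ + 2*β₀*β₀⁻¹^2 + 4*β₀⁻¹^2 + 4*T*β₀*β₀⁻¹^2 + 8*T*β₀⁻¹^2 := by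
    linarith [hβ₀.le, hb0.le, sq_nonneg β₀⁻¹, a1, a2, a3]
  have n1 := mul_nonneg hQ0 hc1
  have n2 := mul_nonneg hP0 hc2
  have n3 := mul_nonneg hR0 hc3
  linarith [hRHS, e1, n1, n2, n3]
end
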